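/- Let g be a piecewise linear unimodal map topologically conjugate to the tent map f via a homeomorphism h with h ∘ f = g ∘ h, let t ≥ 2 be an integer that is not a power of 2, and suppose ψ_t = h ∘ ξ_t ∘ h^{−1} is piecewise linear. Then ψ_t′(0) = (g′(0))^{log₂ t}. -/

import Mathlib

open Set

/-- The tent map `x ↦ 1 - |1 - 2x|`. -/
noncomputable def tent (x : ℝ) : ℝ := 1 - |1 - 2*x|

/-- `g` is unimodal with turning point `v`. -/
def IsUnimodalWith (g : ℝ → ℝ) (v : ℝ) : Prop :=
  ContinuousOn g (Icc 0 1) ∧ MapsTo g (Icc 0 1) (Icc 0 1) ∧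
  v ∈ Ioo (0:ℝ) 1 ∧ StrictMonoOn g (Icc 0 v) ∧ StrictAntiOn g (Icc v 1) ∧
  g 0 = 0 ∧ g 1 = 0 ∧ g v = 1

/-- `g` is unimodal. -/
def IsUnimodal (g : ℝ → ℝ) : Prop := ∃ v, IsUnimodalWith g v

/-- `φ` is piecewise linear on `[0,1]`. -/
def IsPiecewiseLinear (φ : ℝ → ℝ) : Prop :=
  ∃ (m : ℕ) (a : ℕ → ℝ), 0 < m ∧ a 0 = 0 ∧ a m = 1 ∧
    (∀ i < m, a i < a (i+1)) ∧
    ∀ i < m, ∃ c d : ℝ, ∀ x ∈ Icc (a i) (a (i+1)), φ x = c * x + d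
/-- `φ` is affine on `[s,e]`. -/
def LinOnIcc (φ : ℝ → ℝ) (s e : ℝ) : Prop := ∃ c d : ℝ, ∀ x ∈ Icc s e, φ x = c * x + d

/-- `a` is the first (smallest) positive kink of `φ`:
`φ` is linear on `[0,a]` and on no larger interval `[0,c]`. -/
def FirstKink (φ : ℝ → ℝ) (a : ℝ) : Prop :=
  0 < a ∧ LinOnIcc φ 0 a ∧ ∀ c, a < c → ¬ LinOnIcc φ 0 c

/-- The complete preimage of `0` under `g` (inside `[0,1]`). -/
def preimZero (g : ℝ → ℝ) : Set ℝ :=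
  {x | x ∈ Icc (0:ℝ) 1 ∧ ∃ n : ℕ, 1 ≤ n ∧ g^[n] x = 0}

/-- The map `ξ_t`. -/
noncomputable def xi (t : ℕ) (x : ℝ) : ℝ :=
  (1 - (-1:ℝ) ^ ⌊(t:ℝ) * x⌋) / 2 + (-1:ℝ) ^ ⌊(t:ℝ) * x⌋ * Int.fract ((t:ℝ) * x)

/-- `μ n k` enumerates, in increasing order, the `2^(n-1)+1` points of `g^{-n}(0)`. -/
def IsMuFamily (g : ℝ → ℝ) (μ : ℕ → ℕ → ℝ) : Prop :=
  ∀ n : ℕ, 1 ≤ n →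
    (∀ k ≤ 2^(n-1), μ n k ∈ Icc (0:ℝ) 1 ∧ g^[n] (μ n k) = 0) ∧
    (∀ k < 2^(n-1), μ n k < μ n (k+1)) ∧
    (∀ x ∈ Icc (0:ℝ) 1, g^[n] x = 0 → ∃ k ≤ 2^(n-1), x = μ n k)

/-- `ψ` is monotone (in either direction) on `s`. -/
def MonoOrAntiOn (ψ : ℝ → ℝ) (s : Set ℝ) : Prop := MonotoneOn ψ s ∨ AntitoneOn ψ s

/-- `[c,d]` is a maximal interval of monotonicity of `ψ` in `[0,1]`. -/
def IsMaxMonoInterval (ψ : ℝ → ℝ) (c d : ℝ) : Prop :=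
  0 ≤ c ∧ c < d ∧ d ≤ 1 ∧ MonoOrAntiOn ψ (Icc c d) ∧
  ∀ c' d', 0 ≤ c' → d' ≤ 1 → Icc c d ⊆ Icc c' d' → Icc c d ≠ Icc c' d' →
    ¬ MonoOrAntiOn ψ (Icc c' d')

/-- `ψ` has exactly `N` maximal intervals of monotonicity, cut at points `b 0 < ⋯ < b N`. -/
def HasExactlyMonoIntervals (ψ : ℝ → ℝ) (N : ℕ) : Prop :=
  ∃ b : ℕ → ℝ, b 0 = 0 ∧ b N = 1 ∧ (∀ i < N, b i < b (i+1)) ∧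
    (∀ i < N, MonoOrAntiOn ψ (Icc (b i) (b (i+1)))) ∧
    (∀ i, i + 2 ≤ N → ¬ MonoOrAntiOn ψ (Icc (b i) (b (i+2))))

open Filter Topology

/-!
Near `0` the tent map doubles and `ξ_t` multiplies by `t`, while `g` and `ψ_t` are linear with
slopes `g′(0)` and `ψ_t′(0)`. Transporting through the increasing homeomorphism `h` gives
`h (2x) = g′(0) h(x)` and `h (t x) = ψ_t′(0) h(x)` for small `x`. Comparing `h (δ / 2^m)` with
`h (δ / t^n)` by monotonicity, `2^m ≤ t^n` forces `g′(0)^m ≤ ψ_t′(0)^n` and conversely, so the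
two scalings have the same exponent: `log ψ_t′(0) / log t = log g′(0) / log 2`.
-/

theorem mul_le_mul_of_forall_nat_mul_le {x y u v : ℝ} (hx : 0 < x) (hy : 0 ≤ y)
    (H : ∀ m n : ℕ, m * x ≤ n * y → m * u ≤ n * v) : u * y ≤ v * x := by
  set c := y / x
  have hc : 0 ≤ c := div_nonneg hy hx.le
  have hlim : Tendsto (fun n : ℕ ↦ u * (⌊c * n⌋₊ / n : ℝ)) atTop (𝓝 (u * c)) :=
    ((tendsto_nat_floor_mul_div_atTop hc).comp tendsto_natCast_atTop_atTop).const_mul u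
  have hbound : ∀ᶠ n : ℕ in atTop, u * (⌊c * n⌋₊ / n : ℝ) ≤ v := by
    filter_upwards [eventually_gt_atTop 0] with n hn
    have hn' : (0 : ℝ) < n := by exact_mod_cast hn
    have hfloor : (⌊c * n⌋₊ : ℝ) * x ≤ n * y := by
      have := Nat.floor_le (mul_nonneg hc hn'.le)
      calc (⌊c * n⌋₊ : ℝ) * x ≤ c * n * x := by gcongr
        _ = n * y := by simp only [c]; field_simp
    rw [mul_div_assoc', div_le_iff₀ hn', mul_comm u, mul_comm v]
    exact H _ _ hfloor
  have := le_of_tendsto hlim hbound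
  rwa [mul_div_assoc', div_le_iff₀ hx] at this

def ScalesOn (φ : ℝ → ℝ) (δ a α : ℝ) : Prop :=
  ∀ x ∈ Icc 0 (δ / a), φ (a * x) = α * φ x

section Scaling

variable {φ : ℝ → ℝ} {δ a b α β : ℝ}

theorem map_eq_pow_mul_map_div_pow (ha : 1 ≤ a)
    (hα : ScalesOn φ δ a α) (m : ℕ) :
    ∀ x ∈ Icc 0 δ, φ x = α ^ m * φ (x / a ^ m) := by
  induction m with
  | zero => simp
  | succ m ih =>
    intro x hx
    have hxa : x / a ^ (m + 1) ∈ Icc 0 (δ / a) := by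
      refine ⟨by have := hx.1; positivity, ?_⟩
      rw [pow_succ, ← div_div]
      gcongr
      exact (div_le_self hx.1 (one_le_pow₀ ha)).trans hx.2
    have hshift : a * (x / a ^ (m + 1)) = x / a ^ m := by
      field_simp [(by positivity : a ≠ 0)]
      ring
    rw [ih x hx, ← hshift, hα _ hxa, pow_succ]
    ring

theorem pos_of_scaling (hδ : 0 < δ) (hpos : ∀ x ∈ Ioc 0 δ, 0 < φ x) (ha : 1 ≤ a)
    (hα : ScalesOn φ δ a α) : 0 < α := by
  have ha0 : 0 < a := by linarith
  have hδa : δ / a ∈ Ioc 0 δ := ⟨by positivity, div_le_self hδ.le ha⟩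
  have := hα (δ / a) (Ioc_subset_Icc_self ⟨hδa.1, le_rfl⟩)
  rw [mul_div_cancel₀ _ ha0.ne'] at this
  exact pos_of_mul_pos_left (this ▸ hpos δ ⟨hδ, le_rfl⟩) (hpos _ hδa).le

theorem pow_le_pow_of_scaling (hδ : 0 < δ) (hmono : MonotoneOn φ (Icc 0 δ))
    (hpos : ∀ x ∈ Ioc 0 δ, 0 < φ x) (ha : 1 ≤ a) (hb : 1 ≤ b)
    (hα : ScalesOn φ δ a α) (hβ : ScalesOn φ δ b β)
    {m n : ℕ} (hmn : a ^ m ≤ b ^ n) : α ^ m ≤ β ^ n := by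
  have hδ' : δ ∈ Icc 0 δ := ⟨hδ.le, le_rfl⟩
  have hx : δ / b ^ n ∈ Ioc 0 δ := ⟨by positivity, div_le_self hδ.le (one_le_pow₀ hb)⟩
  have hy : δ / a ^ m ∈ Ioc 0 δ := ⟨by positivity, div_le_self hδ.le (one_le_pow₀ ha)⟩
  have hxy : φ (δ / b ^ n) ≤ φ (δ / a ^ m) :=
    hmono (Ioc_subset_Icc_self hx) (Ioc_subset_Icc_self hy)
      (div_le_div_of_nonneg_left hδ.le (by positivity) hmn)
  have hβn : 0 < β ^ n := pow_pos (pos_of_scaling hδ hpos hb hβ) n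
  have key : α ^ m * φ (δ / a ^ m) ≤ β ^ n * φ (δ / a ^ m) := by
    rw [← map_eq_pow_mul_map_div_pow ha hα m δ hδ']
    calc φ δ = β ^ n * φ (δ / b ^ n) := map_eq_pow_mul_map_div_pow hb hβ n δ hδ'
      _ ≤ β ^ n * φ (δ / a ^ m) := by gcongr
  exact le_of_mul_le_mul_right key (hpos _ hy)

theorem nat_mul_log_le_of_scaling (hδ : 0 < δ) (hmono : MonotoneOn φ (Icc 0 δ))
    (hpos : ∀ x ∈ Ioc 0 δ, 0 < φ x) (ha : 1 ≤ a) (hb : 1 ≤ b)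
    (hα : ScalesOn φ δ a α) (hβ : ScalesOn φ δ b β) (m n : ℕ)
    (hmn : m * Real.log a ≤ n * Real.log b) : m * Real.log α ≤ n * Real.log β := by
  have hα0 := pos_of_scaling hδ hpos ha hα
  have hβ0 := pos_of_scaling hδ hpos hb hβ
  rw [← Real.log_pow, ← Real.log_pow] at hmn ⊢
  have := pow_le_pow_of_scaling hδ hmono hpos ha hb hα hβ
    ((Real.log_le_log_iff (by positivity) (by positivity)).mp hmn)
  exact Real.log_le_log (by positivity) this

theorem eq_rpow_logb_of_scaling (hδ : 0 < δ) (hmono : MonotoneOn φ (Icc 0 δ))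
    (hpos : ∀ x ∈ Ioc 0 δ, 0 < φ x) (ha : 1 < a) (hb : 1 < b)
    (hα : ScalesOn φ δ a α) (hβ : ScalesOn φ δ b β) :
    β = α ^ Real.logb a b := by
  have hLa := Real.log_pos ha
  have hLb := Real.log_pos hb
  have hle := mul_le_mul_of_forall_nat_mul_le hLa hLb.le
    (nat_mul_log_le_of_scaling hδ hmono hpos ha.le hb.le hα hβ)
  have hge := mul_le_mul_of_forall_nat_mul_le hLb hLa.le
    (nat_mul_log_le_of_scaling hδ hmono hpos hb.le ha.le hβ hα)
  rw [Real.rpow_def_of_pos (pos_of_scaling hδ hpos ha.le hα), Real.logb,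
    ← Real.exp_log (pos_of_scaling hδ hpos hb.le hβ)]
  congr 1
  field_simp
  linarith

end Scaling

theorem tent_zero : tent 0 = 0 := by
  simp [tent]

theorem tent_of_le_half {x : ℝ} (hx : x ≤ 1 / 2) : tent x = 2 * x := by
  rw [tent, abs_of_nonneg (by linarith)]
  ring

theorem xi_of_mul_mem_Ico {t : ℕ} {x : ℝ} (hx : (t : ℝ) * x ∈ Ico 0 1) : xi t x = t * x := by
  rw [xi, Int.floor_eq_zero_iff.mpr hx, Int.fract_eq_self.mpr hx]
  norm_num

section UnitInterval

variable {h : ℝ → ℝ}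

theorem strictMonoOn_Icc_of_bijOn (hc : ContinuousOn h (Icc 0 1))
    (hb : BijOn h (Icc 0 1) (Icc 0 1)) (h0 : h 0 ≠ 1) : StrictMonoOn h (Icc 0 1) := by
  refine (hc.strictMonoOn_of_injOn_Icc' zero_le_one hb.injOn).resolve_right fun hanti ↦ h0 ?_
  obtain ⟨x, hx, hx1⟩ := hb.surjOn (right_mem_Icc.mpr zero_le_one)
  have hle : h x ≤ h 0 := hanti.antitoneOn (left_mem_Icc.mpr zero_le_one) hx hx.1
  exact le_antisymm (hb.mapsTo (left_mem_Icc.mpr zero_le_one)).2 (hx1 ▸ hle)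

theorem map_zero_of_monotoneOn (hm : MonotoneOn h (Icc 0 1))
    (hb : BijOn h (Icc 0 1) (Icc 0 1)) : h 0 = 0 := by
  obtain ⟨x, hx, hx0⟩ := hb.surjOn (left_mem_Icc.mpr zero_le_one)
  have hle : h 0 ≤ h x := hm (left_mem_Icc.mpr zero_le_one) hx hx.1
  exact le_antisymm (hx0 ▸ hle) (hb.mapsTo (left_mem_Icc.mpr zero_le_one)).1

theorem exists_mem_Ioo_map_le (hm : StrictMonoOn h (Icc 0 1))
    (hs : SurjOn h (Icc 0 1) (Icc 0 1)) (h0 : h 0 = 0) {r : ℝ} (hr : 0 < r) :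
    ∃ δ ∈ Ioo (0 : ℝ) 1, h δ ≤ r := by
  obtain ⟨w, hw, hwr⟩ := hs ⟨(lt_min hr one_pos).le, min_le_right r 1⟩
  have hw0 : 0 < w := by
    refine hw.1.lt_of_ne fun hw0 ↦ ?_
    rw [← hw0, h0] at hwr
    exact (lt_min hr one_pos).ne hwr
  refine ⟨min w (1 / 2), ⟨by positivity, by linarith [min_le_right w (1 / 2)]⟩, ?_⟩
  calc h (min w (1 / 2)) ≤ h w :=
        hm.monotoneOn ⟨by positivity, by linarith [min_le_right w (1 / 2)]⟩ hw (min_le_left _ _)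
    _ ≤ r := hwr ▸ min_le_left r 1

end UnitInterval

theorem psi_t_slope_at_zero_general
    (g h hinv ψt : ℝ → ℝ) (t : ℕ) (sg sψ : ℝ)
    (hg : IsUnimodal g)
    (hhc : ContinuousOn h (Icc 0 1)) (hhb : BijOn h (Icc 0 1) (Icc 0 1))
    (hconj : ∀ x ∈ Icc (0:ℝ) 1, h (tent x) = g (h x))
    (hinvl : ∀ x ∈ Icc (0:ℝ) 1, hinv (h x) = x)
    (ht : 2 ≤ t)
    (hψt : ∀ x ∈ Icc (0:ℝ) 1, ψt x = h (xi t (hinv x)))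
    (hsg : ∃ a : ℝ, 0 < a ∧ ∀ x ∈ Icc (0:ℝ) a, g x = sg * x)
    (hsψ : ∃ q : ℝ, 0 < q ∧ ∀ x ∈ Icc (0:ℝ) q, ψt x = sψ * x) :
    sψ = sg ^ (Real.logb 2 t) := by
  obtain ⟨-, -, -, -, -, -, -, hg1, -⟩ := hg
  obtain ⟨a, ha, hga⟩ := hsg
  obtain ⟨q, hq, hψq⟩ := hsψ
  -- `h 0` is a fixed point of `g` and `g 1 = 0`, so `h` preserves orientation
  have hfix : h 0 = g (h 0) := by simpa [tent_zero] using hconj 0 (left_mem_Icc.mpr zero_le_one)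
  have hmono := strictMonoOn_Icc_of_bijOn hhc hhb fun h01 ↦ by simp [h01, hg1] at hfix
  have h0 := map_zero_of_monotoneOn hmono.monotoneOn hhb
  obtain ⟨δ, ⟨hδ0, hδ1⟩, hhδ⟩ := exists_mem_Ioo_map_le hmono hhb.surjOn h0 (lt_min ha hq)
  have hsub : Icc 0 δ ⊆ Icc 0 1 := Icc_subset_Icc_right hδ1.le
  have hbound : ∀ x ∈ Icc 0 δ, h x ∈ Icc 0 (min a q) := fun x hx ↦
    ⟨h0 ▸ hmono.monotoneOn (left_mem_Icc.mpr zero_le_one) (hsub hx) hx.1,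
      (hmono.monotoneOn (hsub hx) (hsub (right_mem_Icc.mpr hδ0.le)) hx.2).trans hhδ⟩
  have ht1 : (1 : ℝ) < t := by exact_mod_cast ht
  refine eq_rpow_logb_of_scaling hδ0 (hmono.monotoneOn.mono hsub)
    (fun x hx ↦ h0 ▸ hmono (left_mem_Icc.mpr zero_le_one) (hsub (Ioc_subset_Icc_self hx)) hx.1)
    one_lt_two ht1 (fun x hx ↦ ?_) (fun x hx ↦ ?_)
  · have hxδ : x ∈ Icc 0 δ := ⟨hx.1, by linarith [hx.2]⟩
    rw [← tent_of_le_half (by linarith [hx.2]), hconj x (hsub hxδ),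
      hga _ ⟨(hbound x hxδ).1, (hbound x hxδ).2.trans (min_le_left a q)⟩]
  · have htx : (t : ℝ) * x ≤ δ := (le_div_iff₀' (by linarith)).mp hx.2
    have hxδ : x ∈ Icc 0 δ := ⟨hx.1, hx.2.trans (div_le_self hδ0.le ht1.le)⟩
    calc h (t * x) = h (xi t (hinv (h x))) := by
          rw [hinvl x (hsub hxδ), xi_of_mul_mem_Ico ⟨mul_nonneg t.cast_nonneg hx.1, by linarith⟩]
      _ = ψt (h x) := (hψt _ (hhb.mapsTo (hsub hxδ))).symm
      _ = sψ * h x := hψq _ ⟨(hbound x hxδ).1, (hbound x hxδ).2.trans (min_le_right a q)⟩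

/-- if `ψ_t = h ∘ ξ_t ∘ h⁻¹` is piecewise linear (with `t` not a power
of 2), then `ψ_t′(0) = (g′(0))^(log₂ t)`. -/
theorem psi_t_slope_at_zero
    (g h hinv ψt : ℝ → ℝ) (t : ℕ) (sg sψ : ℝ)
    (hg : IsUnimodal g) (hgPL : IsPiecewiseLinear g)
    (hhc : ContinuousOn h (Icc 0 1)) (hhb : BijOn h (Icc 0 1) (Icc 0 1))
    (hconj : ∀ x ∈ Icc (0:ℝ) 1, h (tent x) = g (h x))
    (hinvl : ∀ x ∈ Icc (0:ℝ) 1, hinv (h x) = x)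
    (hinvr : ∀ x ∈ Icc (0:ℝ) 1, h (hinv x) = x)
    (ht : 2 ≤ t) (htp : ¬ ∃ j : ℕ, t = 2^j)
    (hψt : ∀ x ∈ Icc (0:ℝ) 1, ψt x = h (xi t (hinv x)))
    (hψtPL : IsPiecewiseLinear ψt)
    (hsg : ∃ a : ℝ, 0 < a ∧ ∀ x ∈ Icc (0:ℝ) a, g x = sg * x)
    (hsψ : ∃ q : ℝ, 0 < q ∧ ∀ x ∈ Icc (0:ℝ) q, ψt x = sψ * x) :
    sψ = sg ^ (Real.logb 2 t) :=
  psi_t_slope_at_zero_general g h hinv ψt t sg sψ hg hhc hhb hconj hinvl ht hψt hsg hsψ
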